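/- Let x be an infinite word that is not ultimately periodic and suppose p(n+1, x) = p(n, x) + 1 for some n ≥ 1. Then the reduced Rauzy graph G'_n(x) has exactly one right-special vertex and exactly one left-special vertex, and either they coincide (yielding an ∞-shape graph with one bi-special vertex and two cycles) or there exists a positive integer d such that G'_{n+d}(x) is of ∞-shape. -/

import Mathlib

open Filter

variable {A : Type*}

/-- The factor of the infinite word `x` of length `n` starting at position `j` (0-indexed). -/
def subwordAt (x : ℕ → A) (j n : ℕ) : List A := (List.range n).map fun i => x (j + i)

/-- `w` is a factor (subword) of the infinite word `x`. -/
def IsFactor (w : List A) (x : ℕ → A) : Prop := ∃ j, subwordAt x j w.length = w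

/-- The subword complexity `p(n, x)`: the number of distinct length-`n` factors of `x`. -/
noncomputable def complexity (x : ℕ → A) (n : ℕ) : ℕ :=
  Set.ncard {w : List A | w.length = n ∧ IsFactor w x}

/-- `x` is ultimately periodic. -/
def UltimatelyPeriodic (x : ℕ → A) : Prop := ∃ N T, 0 < T ∧ ∀ i ≥ N, x (i + T) = x i

/-- `w` is a left-special factor of `x`. -/
def LeftSpecial (w : List A) (x : ℕ → A) : Prop :=
  ∃ a b : A, a ≠ b ∧ IsFactor (a :: w) x ∧ IsFactor (b :: w) x

/-- `w` is a right-special factor of `x`. -/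
def RightSpecial (w : List A) (x : ℕ → A) : Prop :=
  ∃ a b : A, a ≠ b ∧ IsFactor (w ++ [a]) x ∧ IsFactor (w ++ [b]) x

/-- `w` occurs infinitely many times in `x`. -/
def OccursInfinitely (w : List A) (x : ℕ → A) : Prop :=
  {j : ℕ | subwordAt x j w.length = w}.Infinite

/-- `x` is `n`-recurrent: every length-`n` factor occurs infinitely often. -/
def NRecurrent (n : ℕ) (x : ℕ → A) : Prop :=
  ∀ j : ℕ, {i : ℕ | subwordAt x i n = subwordAt x j n}.Infinite

/-- The shift of `x` by `s` places. -/
def shiftWord (x : ℕ → A) (s : ℕ) : ℕ → A := fun i => x (s + i)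

/-- `s_m`: the length of the `m`-th non-recurrent prefix of `x`. -/
noncomputable def srec (x : ℕ → A) (m : ℕ) : ℕ := sInf {s : ℕ | NRecurrent m (shiftWord x s)}

/-- `z_m`: the maximal `m`-recurrent tail of `x`, so that `x = a_m z_m`. -/
noncomputable def ztail (x : ℕ → A) (m : ℕ) : ℕ → A := shiftWord x (srec x m)

/-- The repetition function `r(n, x)`: the least `m ≥ 1` such that
`x_{m+1} … x_{m+n} = x_{i+1} … x_{i+n}` for some `0 ≤ i < m`. -/
noncomputable def repFn (x : ℕ → A) (n : ℕ) : ℕ :=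
  sInf {m : ℕ | 0 < m ∧ ∃ i < m, subwordAt x m n = subwordAt x i n}

/-- A right-special factor `w` is essential if it is a suffix of right-special
factors of every length `m ≥ |w|`. -/
def EssentialRightSpecial (w : List A) (x : ℕ → A) : Prop :=
  RightSpecial w x ∧
    ∀ m, w.length ≤ m → ∃ W : List A, W.length = m ∧ RightSpecial W x ∧ W.drop (m - w.length) = w

/-- `C` is (the word read along) a cycle at `w` in the Rauzy graph `𝒢_n(y)`:
it has length `> n`, prefix `w`, suffix `w`, and is a factor of `y`. -/
def IsCycleAt (y : ℕ → A) (n : ℕ) (w C : List A) : Prop :=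
  n < C.length ∧ C.take n = w ∧ C.drop (C.length - n) = w ∧ IsFactor C y

/-- The Rauzy graph `𝒢_n(y)` is of `∞`-shape with bi-special vertex `w`
and the two (simple) cycles `U` and `V`. -/
def InftyShape (y : ℕ → A) (n : ℕ) (w U V : List A) : Prop :=
  w.length = n ∧ LeftSpecial w y ∧ RightSpecial w y ∧
  (∀ v : List A, v.length = n → IsFactor v y → (LeftSpecial v y ∨ RightSpecial v y) → v = w) ∧
  IsCycleAt y n w U ∧ IsCycleAt y n w V ∧ U ≠ V ∧
  (∀ j, 0 < j → j < U.length - n → (U.drop j).take n ≠ w) ∧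
  (∀ j, 0 < j → j < V.length - n → (V.drop j).take n ≠ w) ∧
  (∀ v : List A, v.length = n → IsFactor v y →
    (∃ j ≤ U.length - n, (U.drop j).take n = v) ∨ (∃ j ≤ V.length - n, (V.drop j).take n = v))

/-- The word read along the concatenated path `U V^b U`, where `U`, `V` are
cycles at a vertex of length `n` (gluing overlaps of length `n`). -/
def cyclePow (n : ℕ) (U V : List A) (b : ℕ) : List A :=
  U ++ (List.replicate b (V.drop n)).flatten ++ U.drop n

/-- The irrationality exponent of a real number, valued in `ℝ≥0∞`. -/
noncomputable def irrationalityExponent (ξ : ℝ) : ENNReal :=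
  ⨆ (μ : ℝ) (_ : {q : ℕ | 0 < q ∧ ∃ p : ℤ, |ξ - p / q| < 1 / (q : ℝ) ^ μ}.Infinite),
    ENNReal.ofReal μ

/-!
The recurrent factors of `x` of length at most `m` are exactly the factors of `z_m`, so
`G'_n(x)` is the Rauzy graph of the language of recurrent factors. In a Rauzy graph the
growth `p(n + 1) - p(n)` is `∑ (d⁺(u) - 1) = ∑ (d⁻(u) - 1)`. Every vertex of `G'_n(x)` has at
least as many out-edges in the graph of all factors, where the growth is `1`, and by
Morse–Hedlund on the non-periodic tail the growth cannot be `0`; hence `G'_n(x)` has growth `1`: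
a unique right-special vertex `R`, of out-degree `2`, and a unique left-special vertex `L`.

Away from `R` the graph is deterministic, and the path from `L` must reach `R`, for otherwise
`z_{n+1}` would be ultimately periodic. If `R ≠ L`, then a vertex with two out-edges one level up
must be `cR` with `c` the unique left extension of `R`, so the growth is again `1`, and the path
from the new `L` to the new `R` is one step shorter. After `d` levels the two special vertices
coincide, and the two first-return cycles at that bispecial vertex give the `∞` shape.
-/

section CardSum

variable {ι : Type*} {s : Finset ι} {f : ι → ℕ}

lemma Finset.eq_one_of_sum_le_card (h1 : ∀ i ∈ s, 1 ≤ f i) (h : ∑ i ∈ s, f i ≤ s.card) :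
    ∀ i ∈ s, f i = 1 := by
  have hsum : ∑ i ∈ s, f i = ∑ _i ∈ s, 1 :=
    le_antisymm (by simpa using h) (Finset.sum_le_sum h1)
  exact fun i hi => (Finset.sum_eq_sum_iff_of_le h1).1 hsum.symm i hi |>.symm

lemma Finset.exists_eq_two_of_sum_eq_card_add_one [DecidableEq ι]
    (h1 : ∀ i ∈ s, 1 ≤ f i) (h : ∑ i ∈ s, f i = s.card + 1) :
    ∃ i ∈ s, f i = 2 ∧ ∀ j ∈ s, j ≠ i → f j = 1 := by
  obtain ⟨i, hi, hfi⟩ : ∃ i ∈ s, 1 < f i := by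
    by_contra! hle
    have := Finset.eq_one_of_sum_le_card h1 ((Finset.sum_le_sum hle).trans (by simp))
    rw [Finset.sum_congr rfl this] at h
    simp at h
  have hsplit := Finset.add_sum_erase s f hi
  have hcard := Finset.card_erase_add_one hi
  have hrest := Finset.eq_one_of_sum_le_card (s := s.erase i) (f := f)
    (fun j hj => h1 j (Finset.mem_of_mem_erase hj)) (by omega)
  have hrest_sum : ∑ j ∈ s.erase i, f j = (s.erase i).card := by
    rw [Finset.sum_congr rfl hrest]; simp
  exact ⟨i, hi, by omega, fun j hj hji => hrest j (Finset.mem_erase.2 ⟨hji, hj⟩)⟩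

lemma Finset.sum_le_card_add_one (h2 : ∀ i ∈ s, f i ≤ 2)
    (huniq : ∀ i ∈ s, ∀ j ∈ s, 1 < f i → 1 < f j → i = j) :
    ∑ i ∈ s, f i ≤ s.card + 1 := by
  classical
  by_cases hex : ∃ i ∈ s, 1 < f i
  · obtain ⟨i, hi, hfi⟩ := hex
    have hrest : ∑ j ∈ s.erase i, f j ≤ ∑ _j ∈ s.erase i, 1 := by
      refine Finset.sum_le_sum fun j hj => ?_
      by_contra! hlt
      exact Finset.ne_of_mem_erase hj (huniq j (Finset.mem_of_mem_erase hj) i hi hlt hfi)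
    rw [← Finset.add_sum_erase s f hi]
    have := h2 i hi
    have := Finset.card_erase_add_one hi
    simp only [Finset.sum_const, smul_eq_mul, mul_one] at hrest
    omega
  · push Not at hex
    exact ((Finset.sum_le_sum hex).trans (by simp)).trans (Nat.le_succ _)

lemma Set.ncard_eq_sum_ncard_inter_preimage {α β : Type*} [DecidableEq β] {s : Set α}
    {t : Set β} {f : α → β} (hs : s.Finite) (ht : t.Finite) (hf : Set.MapsTo f s t) :
    s.ncard = ∑ b ∈ ht.toFinset, (s ∩ f ⁻¹' {b}).ncard := by
  rw [Set.ncard_eq_toFinset_card s hs,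
    Finset.card_eq_sum_card_fiberwise (f := f) (t := ht.toFinset)
      fun a ha => by simpa using hf (by simpa using ha)]
  refine Finset.sum_congr rfl fun b _ => ?_
  rw [← Set.ncard_coe_finset]
  congr 1
  ext a
  simp

end CardSum

namespace Rauzy

section Subword

@[simp] lemma length_subwordAt (x : ℕ → A) (j n : ℕ) : (subwordAt x j n).length = n := by
  simp [subwordAt]

@[simp] lemma getElem_subwordAt (x : ℕ → A) (j n i : ℕ) (h : i < (subwordAt x j n).length) :
    (subwordAt x j n)[i] = x (j + i) := by
  simp [subwordAt]

lemma subwordAt_eq_subwordAt_iff {x y : ℕ → A} {i j n : ℕ} :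
    subwordAt x i n = subwordAt y j n ↔ ∀ k < n, x (i + k) = y (j + k) := by
  simp [List.ext_getElem_iff]

lemma take_subwordAt (x : ℕ → A) (j : ℕ) {k n : ℕ} (h : k ≤ n) :
    (subwordAt x j n).take k = subwordAt x j k := by
  apply List.ext_getElem <;> simp [h]

lemma drop_subwordAt (x : ℕ → A) (j n k : ℕ) :
    (subwordAt x j n).drop k = subwordAt x (j + k) (n - k) := by
  apply List.ext_getElem <;> simp [add_assoc]

lemma subwordAt_succ (x : ℕ → A) (j n : ℕ) :
    subwordAt x j (n + 1) = subwordAt x j n ++ [x (j + n)] := by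
  simp [subwordAt, List.range_succ]

lemma subwordAt_succ_eq_cons (x : ℕ → A) (j n : ℕ) :
    subwordAt x j (n + 1) = x j :: subwordAt x (j + 1) n := by
  apply List.ext_getElem (by simp)
  rintro (_ | k) _ _ <;> simp [add_assoc, add_comm 1]

lemma tail_subwordAt (x : ℕ → A) (j n : ℕ) :
    (subwordAt x j (n + 1)).tail = subwordAt x (j + 1) n := by
  simpa using drop_subwordAt x j (n + 1) 1

lemma isFactor_subwordAt (x : ℕ → A) (j n : ℕ) : IsFactor (subwordAt x j n) x :=
  ⟨j, by rw [length_subwordAt]⟩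

end Subword

section Language

def slice (F : Set (List A)) (n : ℕ) : Set (List A) := {w | w.length = n ∧ w ∈ F}

def rightExts (F : Set (List A)) (u : List A) : Set A := {a | u ++ [a] ∈ F}

def leftExts (F : Set (List A)) (u : List A) : Set A := {a | a :: u ∈ F}

lemma slice_finite [Finite A] (F : Set (List A)) (n : ℕ) : (slice F n).Finite :=
  (List.finite_length_eq A n).subset fun _ hw => hw.1

lemma slice_succ_inter_dropLast {F : Set (List A)} {n : ℕ} {u : List A} (hu : u.length = n) :
    slice F (n + 1) ∩ List.dropLast ⁻¹' {u} = (fun a => u ++ [a]) '' rightExts F u := by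
  ext w
  constructor
  · rintro ⟨⟨hw, hwF⟩, rfl : w.dropLast = u⟩
    have hne : w ≠ [] := List.ne_nil_of_length_pos (by omega)
    exact ⟨w.getLast hne, by rwa [rightExts, Set.mem_ofPred_eq, List.dropLast_append_getLast],
      List.dropLast_append_getLast hne⟩
  · rintro ⟨a, ha, rfl⟩
    exact ⟨⟨by simp [hu], ha⟩, by simp⟩

lemma slice_succ_inter_tail {F : Set (List A)} {n : ℕ} {u : List A} (hu : u.length = n) :
    slice F (n + 1) ∩ List.tail ⁻¹' {u} = (fun a => a :: u) '' leftExts F u := by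
  ext w
  constructor
  · rintro ⟨⟨hw, hwF⟩, rfl : w.tail = u⟩
    have hne : w ≠ [] := List.ne_nil_of_length_pos (by omega)
    exact ⟨w.head hne, by rwa [leftExts, Set.mem_ofPred_eq, List.cons_head_tail hne],
      List.cons_head_tail hne⟩
  · rintro ⟨a, ha, rfl⟩
    exact ⟨⟨by simp [hu], ha⟩, by simp⟩

lemma ncard_slice_succ_eq_sum_rightExts [Finite A] {F : Set (List A)}
    (hF : ∀ w a, w ++ [a] ∈ F → w ∈ F) (n : ℕ) :
    (slice F (n + 1)).ncard = ∑ u ∈ (slice_finite F n).toFinset, (rightExts F u).ncard := by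
  classical
  rw [Set.ncard_eq_sum_ncard_inter_preimage (slice_finite F _) (slice_finite F n)
    (f := List.dropLast)]
  · refine Finset.sum_congr rfl fun u hu => ?_
    rw [slice_succ_inter_dropLast ((slice_finite F n).mem_toFinset.1 hu).1,
      Set.ncard_image_of_injective _ fun a b h => by simpa using h]
  · rintro w ⟨hw, hwF⟩
    have hne : w ≠ [] := List.ne_nil_of_length_pos (by omega)
    refine ⟨by simp [hw], hF _ (w.getLast hne) ?_⟩
    rwa [List.dropLast_append_getLast hne]

lemma ncard_slice_succ_eq_sum_leftExts [Finite A] {F : Set (List A)}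
    (hF : ∀ w a, a :: w ∈ F → w ∈ F) (n : ℕ) :
    (slice F (n + 1)).ncard = ∑ u ∈ (slice_finite F n).toFinset, (leftExts F u).ncard := by
  classical
  rw [Set.ncard_eq_sum_ncard_inter_preimage (slice_finite F _) (slice_finite F n)
    (f := List.tail)]
  · refine Finset.sum_congr rfl fun u hu => ?_
    rw [slice_succ_inter_tail ((slice_finite F n).mem_toFinset.1 hu).1,
      Set.ncard_image_of_injective _ fun a b h => by simpa using h]
  · rintro w ⟨hw, hwF⟩
    have hne : w ≠ [] := List.ne_nil_of_length_pos (by omega)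
    refine ⟨by simp [hw], hF _ (w.head hne) ?_⟩
    rwa [List.cons_head_tail hne]

end Language

section WordLanguage

def factorLang (x : ℕ → A) : Set (List A) := {w | IsFactor w x}

def recLang (x : ℕ → A) : Set (List A) := {w | OccursInfinitely w x}

lemma complexity_eq_ncard_slice (x : ℕ → A) (n : ℕ) :
    complexity x n = (slice (factorLang x) n).ncard := rfl

lemma subwordAt_shiftWord (x : ℕ → A) (s j n : ℕ) :
    subwordAt (shiftWord x s) j n = subwordAt x (s + j) n := by
  simp [subwordAt, shiftWord, add_assoc]

lemma subwordAt_of_infix {x : ℕ → A} {j : ℕ} {s u t : List A}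
    (h : subwordAt x j (s ++ u ++ t).length = s ++ u ++ t) :
    subwordAt x (j + s.length) u.length = u := by
  have := congrArg (fun l => (l.drop s.length).take u.length) h
  simpa [drop_subwordAt, take_subwordAt] using this

lemma IsFactor.of_infix {x : ℕ → A} {u w : List A} (h : IsFactor w x) (huw : u <:+: w) :
    IsFactor u x := by
  obtain ⟨s, t, rfl⟩ := huw
  obtain ⟨j, hj⟩ := h
  exact ⟨j + s.length, subwordAt_of_infix hj⟩

lemma OccursInfinitely.of_infix {x : ℕ → A} {u w : List A} (h : OccursInfinitely w x)
    (huw : u <:+: w) : OccursInfinitely u x := by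
  obtain ⟨s, t, rfl⟩ := huw
  refine ((h.image (f := (· + s.length)) fun i _ j _ hij => by simpa using hij)).mono ?_
  rintro _ ⟨j, hj, rfl⟩
  exact subwordAt_of_infix hj

lemma OccursInfinitely.isFactor {x : ℕ → A} {w : List A} (h : OccursInfinitely w x) :
    IsFactor w x :=
  h.nonempty

lemma infinite_preimage_add {S : Set ℕ} (hS : S.Infinite) (s : ℕ) :
    ((s + ·) ⁻¹' S).Infinite :=
  Set.Infinite.preimage' <| (hS.sdiff (Set.finite_Iio s)).mono fun j hj =>
    ⟨hj.1, j - s, by have := hj.2; simp only [Set.mem_Iio, not_lt] at this; dsimp only; omega⟩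

lemma OccursInfinitely.shift {x : ℕ → A} {w : List A} (h : OccursInfinitely w x) (s : ℕ) :
    OccursInfinitely w (shiftWord x s) := by
  simpa [OccursInfinitely, subwordAt_shiftWord] using infinite_preimage_add h s

lemma OccursInfinitely.exists_append [Finite A] {x : ℕ → A} {w : List A}
    (h : OccursInfinitely w x) : ∃ a, OccursInfinitely (w ++ [a]) x := by
  by_contra! hfin
  refine h ((Set.finite_iUnion fun a => Set.not_infinite.1 (hfin a)).subset fun j hj => ?_)
  refine Set.mem_iUnion.2 ⟨x (j + w.length), ?_⟩
  simp only [Set.mem_ofPred_eq, List.length_append, List.length_singleton] at hj ⊢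
  rw [subwordAt_succ, hj]

lemma OccursInfinitely.exists_cons [Finite A] {x : ℕ → A} {w : List A}
    (h : OccursInfinitely w x) : ∃ a, OccursInfinitely (a :: w) x := by
  by_contra! hfin
  have hocc := infinite_preimage_add h 1
  refine hocc ((Set.finite_iUnion fun a => Set.not_infinite.1 (hfin a)).subset fun j hj => ?_)
  refine Set.mem_iUnion.2 ⟨x j, ?_⟩
  simp only [Set.mem_preimage, Set.mem_ofPred_eq, List.length_cons] at hj ⊢
  rw [subwordAt_succ_eq_cons, add_comm, hj]

end WordLanguage

section Tail

lemma OccursInfinitely.of_shift {x : ℕ → A} {w : List A} {s : ℕ}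
    (h : OccursInfinitely w (shiftWord x s)) : OccursInfinitely w x := by
  refine (h.image (f := (s + ·)) fun i _ j _ hij => by simpa using hij).mono ?_
  rintro _ ⟨j, hj, rfl⟩
  simpa [subwordAt_shiftWord] using hj

lemma exists_nrecurrent_shiftWord [Finite A] (x : ℕ → A) (m : ℕ) :
    ∃ s, NRecurrent m (shiftWord x s) := by
  have hbad : {j | ¬ OccursInfinitely (subwordAt x j m) x}.Finite := by
    have hB : {w : List A | w.length = m ∧ ¬ OccursInfinitely w x}.Finite :=
      (List.finite_length_eq A m).subset fun _ hw => hw.1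
    refine (hB.biUnion (t := fun w => {j | subwordAt x j m = w}) fun w hw => ?_).subset
      fun j hj => ?_
    · exact Set.not_infinite.1 (show ¬ {j | subwordAt x j m = w}.Infinite from hw.1 ▸ hw.2)
    · exact Set.mem_biUnion (x := subwordAt x j m) ⟨by simp, hj⟩ rfl
  obtain ⟨b, hb⟩ := hbad.bddAbove
  refine ⟨b + 1, fun j => ?_⟩
  have hrec : OccursInfinitely (subwordAt x (b + 1 + j) m) x := by
    by_contra h
    have := hb h
    omega
  simpa [subwordAt_shiftWord, OccursInfinitely] using infinite_preimage_add hrec (b + 1)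

lemma nrecurrent_ztail [Finite A] (x : ℕ → A) (m : ℕ) : NRecurrent m (ztail x m) :=
  Nat.sInf_mem (exists_nrecurrent_shiftWord x m)

lemma isFactor_ztail_iff [Finite A] {x : ℕ → A} {m : ℕ} {w : List A} (hw : w.length ≤ m) :
    IsFactor w (ztail x m) ↔ OccursInfinitely w x := by
  constructor
  · rintro ⟨j, hj⟩
    refine OccursInfinitely.of_shift (s := srec x m) ((nrecurrent_ztail x m j).mono ?_)
    intro i hi
    have := congrArg (List.take w.length) hi
    rwa [take_subwordAt _ _ hw, take_subwordAt _ _ hw, hj] at this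
  · intro h
    exact (OccursInfinitely.shift h (srec x m)).nonempty

lemma slice_factorLang_ztail [Finite A] (x : ℕ → A) {k m : ℕ} (hk : k ≤ m) :
    slice (factorLang (ztail x m)) k = slice (recLang x) k := by
  ext w
  simp only [slice, factorLang, recLang, Set.mem_ofPred_eq, and_congr_right_iff]
  rintro rfl
  exact isFactor_ztail_iff hk

lemma subwordAt_ztail_mem_recLang [Finite A] (x : ℕ → A) {k m : ℕ} (hk : k ≤ m) (j : ℕ) :
    subwordAt (ztail x m) j k ∈ recLang x :=
  (isFactor_ztail_iff (by simpa using hk)).1 (isFactor_subwordAt _ j k)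

end Tail

section Periodicity

lemma UltimatelyPeriodic.of_shift {x : ℕ → A} {s : ℕ}
    (h : UltimatelyPeriodic (shiftWord x s)) : UltimatelyPeriodic x := by
  obtain ⟨N, T, hT, hper⟩ := h
  refine ⟨s + N, T, hT, fun i hi => ?_⟩
  have := hper (i - s) (by omega)
  simp only [shiftWord] at this
  rwa [show s + (i - s + T) = i + T by omega, show s + (i - s) = i by omega] at this

lemma ultimatelyPeriodic_of_subwordAt_eq [Finite A] {y : ℕ → A} {k p : ℕ}
    (h : ∀ i ≥ p, ∀ j ≥ p, subwordAt y i k = subwordAt y j k → y (i + k) = y (j + k)) :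
    UltimatelyPeriodic y := by
  have : Finite {w : List A | w.length = k} := (List.finite_length_eq A k).to_subtype
  obtain ⟨i₀, j₀, hne, heq⟩ := Finite.exists_ne_map_eq_of_infinite
    fun i : ℕ => (⟨subwordAt y (p + i) k, by simp⟩ : {w : List A | w.length = k})
  obtain ⟨i, j, hij, hwin⟩ :
      ∃ i j, i < j ∧ subwordAt y (p + i) k = subwordAt y (p + j) k := by
    rcases hne.lt_or_gt with h' | h'
    · exact ⟨i₀, j₀, h', congrArg Subtype.val heq⟩
    · exact ⟨j₀, i₀, h', congrArg Subtype.val heq.symm⟩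
  have hagree : ∀ t, y (p + i + t) = y (p + j + t) := by
    intro t
    induction t using Nat.strong_induction_on with
    | _ t ih =>
      rcases Nat.lt_or_ge t k with ht | ht
      · exact subwordAt_eq_subwordAt_iff.1 hwin t ht
      · have hstep := h (p + i + (t - k)) (by omega) (p + j + (t - k)) (by omega)
          (subwordAt_eq_subwordAt_iff.2 fun l hl => by
            simpa only [add_assoc] using ih (t - k + l) (by omega))
        rwa [add_assoc, Nat.sub_add_cancel ht, add_assoc (p + j), Nat.sub_add_cancel ht] at hstep
  refine ⟨p + i, j - i, by omega, fun l hl => ?_⟩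
  have := hagree (l - (p + i))
  rw [show p + i + (l - (p + i)) = l by omega, show p + j + (l - (p + i)) = l + (j - i) by omega]
    at this
  exact this.symm

lemma mem_rightExts_factorLang (y : ℕ → A) (i k : ℕ) :
    y (i + k) ∈ rightExts (factorLang y) (subwordAt y i k) := by
  rw [rightExts, Set.mem_ofPred_eq, ← subwordAt_succ]
  exact isFactor_subwordAt y i (k + 1)

lemma mem_factorLang_of_append_mem {x : ℕ → A} {w : List A} {a : A}
    (h : w ++ [a] ∈ factorLang x) : w ∈ factorLang x :=
  IsFactor.of_infix h (List.prefix_append w [a]).isInfix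

/-- The Morse–Hedlund theorem. -/
lemma complexity_lt_complexity_succ [Finite A] {y : ℕ → A} (hy : ¬ UltimatelyPeriodic y)
    (k : ℕ) : complexity y k < complexity y (k + 1) := by
  by_contra! hle
  rw [complexity_eq_ncard_slice, complexity_eq_ncard_slice,
    ncard_slice_succ_eq_sum_rightExts (fun _ _ => mem_factorLang_of_append_mem),
    Set.ncard_eq_toFinset_card _ (slice_finite _ k)] at hle
  have hone := Finset.eq_one_of_sum_le_card (fun u hu => ?_) hle
  · refine hy (ultimatelyPeriodic_of_subwordAt_eq (k := k) (p := 0) fun i _ j _ hij => ?_)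
    have hu : subwordAt y i k ∈ (slice_finite (factorLang y) k).toFinset := by
      simpa [slice, factorLang] using isFactor_subwordAt y i k
    obtain ⟨a, ha⟩ := Set.ncard_eq_one.1 (hone _ hu)
    have hi := mem_rightExts_factorLang y i k
    have hj := mem_rightExts_factorLang y j k
    rw [← hij, ha] at hj
    rw [ha] at hi
    exact hi.trans hj.symm
  · obtain ⟨hlen, j, hj⟩ := (slice_finite _ k).mem_toFinset.1 hu
    rw [hlen] at hj
    refine Nat.one_le_iff_ne_zero.2 (Set.ncard_ne_zero_of_mem (a := y (j + k)) ?_ (Set.toFinite _))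
    simpa [hj] using mem_rightExts_factorLang y j k

lemma ncard_slice_recLang_lt [Finite A] {x : ℕ → A} (hx : ¬ UltimatelyPeriodic x) (k : ℕ) :
    (slice (recLang x) k).ncard < (slice (recLang x) (k + 1)).ncard := by
  rw [← slice_factorLang_ztail x k.le_succ, ← slice_factorLang_ztail x le_rfl]
  exact complexity_lt_complexity_succ (fun h => hx (UltimatelyPeriodic.of_shift h)) k

end Periodicity

section Specials

structure IsBiextendable (F : Set (List A)) : Prop where
  mem_of_infix : ∀ {u w : List A}, w ∈ F → u <:+: w → u ∈ F
  exists_append_mem : ∀ {w : List A}, w ∈ F → ∃ a, w ++ [a] ∈ F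
  exists_cons_mem : ∀ {w : List A}, w ∈ F → ∃ a, a :: w ∈ F

lemma recLang_isBiextendable [Finite A] (x : ℕ → A) : IsBiextendable (recLang x) where
  mem_of_infix h huw := OccursInfinitely.of_infix h huw
  exists_append_mem h := OccursInfinitely.exists_append h
  exists_cons_mem h := OccursInfinitely.exists_cons h

variable {F : Set (List A)} {m : ℕ} {R L : List A} {a b : A}

lemma IsBiextendable.mem_of_append_mem (hF : IsBiextendable F) {w : List A} {a : A}
    (h : w ++ [a] ∈ F) : w ∈ F :=
  hF.mem_of_infix h (List.prefix_append w [a]).isInfix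

lemma IsBiextendable.mem_of_cons_mem (hF : IsBiextendable F) {w : List A} {a : A}
    (h : a :: w ∈ F) : w ∈ F :=
  hF.mem_of_infix h (List.suffix_cons a w).isInfix

lemma IsBiextendable.rightExts_subset_tail (hF : IsBiextendable F) (v : List A) :
    rightExts F v ⊆ rightExts F v.tail := fun e he => by
  cases v with
  | nil => exact he
  | cons c t => exact hF.mem_of_infix he (List.suffix_cons c (t ++ [e])).isInfix

/-- The words of `F` of length `m` and `m + 1` are the vertices and edges of the Rauzy graph of
`F`: it has the unique right-special vertex `R`, with out-edges labelled `a` and `b`, and the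
unique left-special vertex `L`. -/
structure UniqueSpecials (F : Set (List A)) (m : ℕ) (R L : List A) (a b : A) : Prop where
  length_right : R.length = m
  length_left : L.length = m
  ne : a ≠ b
  rightExts_eq : rightExts F R = {a, b}
  leftExts_nontrivial : (leftExts F L).Nontrivial
  eq_right : ∀ u : List A, u.length = m → (rightExts F u).Nontrivial → u = R
  eq_left : ∀ u : List A, u.length = m → (leftExts F u).Nontrivial → u = L

lemma exists_unique_nontrivial_of_sum [Finite A] {E : List A → Set A}
    (hE : ∀ u ∈ slice F m, (E u).Nonempty) (hEF : ∀ u, (E u).Nontrivial → u ∈ F)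
    (hsum : ∑ u ∈ (slice_finite F m).toFinset, (E u).ncard = (slice F m).ncard + 1) :
    ∃ u, u.length = m ∧ (E u).ncard = 2 ∧
      ∀ v, v.length = m → (E v).Nontrivial → v = u := by
  classical
  rw [Set.ncard_eq_toFinset_card _ (slice_finite F m)] at hsum
  obtain ⟨u, hu, hu2, hone⟩ := Finset.exists_eq_two_of_sum_eq_card_add_one
    (fun u hu => (Set.ncard_pos).2 (hE u ((slice_finite F m).mem_toFinset.1 hu))) hsum
  refine ⟨u, ((slice_finite F m).mem_toFinset.1 hu).1, hu2, fun v hv hvE => ?_⟩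
  by_contra hvu
  have := hone v ((slice_finite F m).mem_toFinset.2 ⟨hv, hEF v hvE⟩) hvu
  exact (Set.one_lt_ncard_iff_nontrivial.2 hvE).ne' this

lemma uniqueSpecials_of_ncard [Finite A] (hF : IsBiextendable F)
    (h : (slice F (m + 1)).ncard = (slice F m).ncard + 1) :
    ∃ R L a b, UniqueSpecials F m R L a b := by
  obtain ⟨R, hRm, hR2, hRu⟩ := exists_unique_nontrivial_of_sum (E := rightExts F)
    (fun u hu => hF.exists_append_mem hu.2)
    (fun u ⟨a, ha, _⟩ => hF.mem_of_append_mem ha)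
    ((ncard_slice_succ_eq_sum_rightExts (fun _ _ => hF.mem_of_append_mem) m).symm.trans h)
  obtain ⟨L, hLm, hL2, hLu⟩ := exists_unique_nontrivial_of_sum (E := leftExts F)
    (fun u hu => hF.exists_cons_mem hu.2)
    (fun u ⟨a, ha, _⟩ => hF.mem_of_cons_mem ha)
    ((ncard_slice_succ_eq_sum_leftExts (fun _ _ => hF.mem_of_cons_mem) m).symm.trans h)
  obtain ⟨a, b, hab, hRab⟩ := Set.ncard_eq_two.1 hR2
  exact ⟨R, L, a, b, hRm, hLm, hab, hRab,
    Set.one_lt_ncard_iff_nontrivial.1 (by omega), hRu, hLu⟩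

lemma ncard_le_one_of_not_nontrivial [Finite A] {s : Set A} (h : ¬ s.Nontrivial) : s.ncard ≤ 1 :=
  not_lt.1 (mt Set.one_lt_ncard_iff_nontrivial.1 h)

lemma ncard_slice_recLang_succ [Finite A] {x : ℕ → A} (hx : ¬ UltimatelyPeriodic x) {n : ℕ}
    (hp : complexity x (n + 1) = complexity x n + 1) :
    (slice (recLang x) (n + 1)).ncard = (slice (recLang x) n).ncard + 1 := by
  have hfac : ∀ w a, w ++ [a] ∈ factorLang x → w ∈ factorLang x :=
    fun _ _ => mem_factorLang_of_append_mem
  rw [complexity_eq_ncard_slice, complexity_eq_ncard_slice,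
    ncard_slice_succ_eq_sum_rightExts hfac] at hp
  obtain ⟨u₀, -, hu₀, hu₀u⟩ :=
    exists_unique_nontrivial_of_sum (E := rightExts (factorLang x))
    (fun u hu => by
      obtain ⟨-, j, hj⟩ := hu
      exact Set.nonempty_of_mem (hj ▸ mem_rightExts_factorLang x j u.length))
    (fun u ⟨a, ha, _⟩ => hfac u a ha) hp
  have hsub : ∀ u, rightExts (recLang x) u ⊆ rightExts (factorLang x) u :=
    fun u a ha => OccursInfinitely.isFactor ha
  have hle : (slice (recLang x) (n + 1)).ncard ≤ (slice (recLang x) n).ncard + 1 := by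
    rw [ncard_slice_succ_eq_sum_rightExts (fun _ _ => (recLang_isBiextendable x).mem_of_append_mem),
      Set.ncard_eq_toFinset_card _ (slice_finite _ n)]
    refine Finset.sum_le_card_add_one (fun u hu => ?_) (fun u hu v hv hu1 hv1 => ?_)
    · have hlen := ((slice_finite _ n).mem_toFinset.1 hu).1
      refine (Set.ncard_le_ncard (hsub u)).trans ?_
      by_cases hnt : (rightExts (factorLang x) u).Nontrivial
      · exact (hu₀u u hlen hnt ▸ hu₀).le
      · exact (ncard_le_one_of_not_nontrivial hnt).trans (by norm_num)
    · have hu' := ((Set.one_lt_ncard_iff_nontrivial.1 hu1).mono (hsub u))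
      have hv' := ((Set.one_lt_ncard_iff_nontrivial.1 hv1).mono (hsub v))
      rw [hu₀u u ((slice_finite _ n).mem_toFinset.1 hu).1 hu',
        hu₀u v ((slice_finite _ n).mem_toFinset.1 hv).1 hv']
  have := ncard_slice_recLang_lt hx n
  omega

lemma UniqueSpecials.tail_eq_of_nontrivial (hF : IsBiextendable F)
    (hG : UniqueSpecials F m R L a b) {v : List A}
    (hv : v.length = m + 1) (hvE : (rightExts F v).Nontrivial) : v.tail = R :=
  hG.eq_right _ (by simp [hv]) (hvE.mono (hF.rightExts_subset_tail v))

lemma UniqueSpecials.ncard_slice_succ_le [Finite A] (hF : IsBiextendable F)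
    (hG : UniqueSpecials F m R L a b) (hRL : R ≠ L) :
    (slice F (m + 2)).ncard ≤ (slice F (m + 1)).ncard + 1 := by
  rw [ncard_slice_succ_eq_sum_rightExts (fun _ _ => hF.mem_of_append_mem),
    Set.ncard_eq_toFinset_card _ (slice_finite _ _)]
  refine Finset.sum_le_card_add_one (fun v hv => ?_) (fun v hv v' hv' h1 h1' => ?_)
  · have hlen := ((slice_finite _ _).mem_toFinset.1 hv).1
    by_cases hnt : (rightExts F v).Nontrivial
    · calc (rightExts F v).ncard ≤ (rightExts F R).ncard := by
            rw [← hG.tail_eq_of_nontrivial hF hlen hnt]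
            exact Set.ncard_le_ncard (hF.rightExts_subset_tail v)
        _ = 2 := by rw [hG.rightExts_eq, Set.ncard_pair hG.ne]
    · exact (ncard_le_one_of_not_nontrivial hnt).trans (by norm_num)
  · obtain ⟨c, t, rfl⟩ := List.exists_cons_of_length_eq_add_one
      ((slice_finite _ _).mem_toFinset.1 hv).1
    obtain ⟨c', t', rfl⟩ := List.exists_cons_of_length_eq_add_one
      ((slice_finite _ _).mem_toFinset.1 hv').1
    have ht : t = R := hG.tail_eq_of_nontrivial hF (by simpa using
      ((slice_finite _ _).mem_toFinset.1 hv).1) (Set.one_lt_ncard_iff_nontrivial.1 h1)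
    have ht' : t' = R := hG.tail_eq_of_nontrivial hF (by simpa using
      ((slice_finite _ _).mem_toFinset.1 hv').1) (Set.one_lt_ncard_iff_nontrivial.1 h1')
    subst ht ht'
    by_contra hne
    refine hRL (hG.eq_left _ hG.length_right ⟨c, ?_, c', ?_, fun h => hne (by rw [h])⟩)
    · exact ((slice_finite _ _).mem_toFinset.1 hv).2
    · exact ((slice_finite _ _).mem_toFinset.1 hv').2

lemma IsBiextendable.leftExts_subset_dropLast (hF : IsBiextendable F) (v : List A) :
    leftExts F v ⊆ leftExts F v.dropLast := fun c hc =>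
  hF.mem_of_infix hc ((List.prefix_cons_inj c).2 (List.dropLast_prefix v)).isInfix

lemma UniqueSpecials.left_mem (hF : IsBiextendable F) (hG : UniqueSpecials F m R L a b) :
    L ∈ F :=
  have ⟨_, hc, _⟩ := hG.leftExts_nontrivial
  hF.mem_of_cons_mem hc

open Classical in
/-- The successor of `u` in the Rauzy graph of `F`. It is well defined away from the
right-special vertex; elsewhere the choice of successor is arbitrary. -/
noncomputable def follow (F : Set (List A)) (u : List A) : List A :=
  if h : (rightExts F u).Nonempty then (u ++ [h.some]).tail else u.tail

lemma exists_follow_eq {u : List A} (h : (rightExts F u).Nonempty) :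
    ∃ e ∈ rightExts F u, follow F u = (u ++ [e]).tail :=
  ⟨h.some, h.some_mem, by rw [follow, dif_pos h]⟩

lemma UniqueSpecials.follow_eq (hG : UniqueSpecials F m R L a b) {u : List A} {c : A}
    (hu : u.length = m) (hne : u ≠ R) (hc : u ++ [c] ∈ F) : follow F u = (u ++ [c]).tail := by
  have h : (rightExts F u).Nonempty := ⟨c, hc⟩
  rw [follow, dif_pos h]
  by_contra hne'
  exact hne (hG.eq_right u hu ⟨_, h.some_mem, c, hc, fun e => hne' (by rw [e])⟩)

lemma UniqueSpecials.letter_eq_of_subwordAt_eq (hG : UniqueSpecials F m R L a b) {y : ℕ → A}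
    (hy : ∀ j, subwordAt y j (m + 1) ∈ F) {i j : ℕ} (hij : subwordAt y i m = subwordAt y j m)
    (hne : subwordAt y i m ≠ R) : y (i + m) = y (j + m) := by
  by_contra h
  refine hne (hG.eq_right _ (by simp) ⟨y (i + m), ?_, y (j + m), ?_, h⟩)
  · rw [rightExts, Set.mem_ofPred_eq, ← subwordAt_succ]; exact hy i
  · rw [rightExts, Set.mem_ofPred_eq, hij, ← subwordAt_succ]; exact hy j

lemma UniqueSpecials.follow_subwordAt (hG : UniqueSpecials F m R L a b) {y : ℕ → A}
    (hy : ∀ j, subwordAt y j (m + 1) ∈ F) {j : ℕ} (hne : subwordAt y j m ≠ R) :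
    follow F (subwordAt y j m) = subwordAt y (j + 1) m := by
  rw [hG.follow_eq (by simp) hne (c := y (j + m)) (by rw [← subwordAt_succ]; exact hy j),
    ← subwordAt_succ, tail_subwordAt]

/-- If the path from `L` never met `R`, the tail `z_{m+1}` would eventually follow a cycle of the
Rauzy graph, hence be ultimately periodic. -/
lemma UniqueSpecials.exists_follow_iterate_eq [Finite A] {x : ℕ → A}
    (hx : ¬ UltimatelyPeriodic x) (hG : UniqueSpecials (recLang x) m R L a b) :
    ∃ k, (follow (recLang x))^[k] L = R := by
  by_contra! hmiss
  set z := ztail x (m + 1)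
  have hz : ∀ j, subwordAt z j (m + 1) ∈ recLang x := subwordAt_ztail_mem_recLang x le_rfl
  obtain ⟨p, hp⟩ := (isFactor_ztail_iff (x := x) (m := m + 1) (by simp [hG.length_left])).2
    (hG.left_mem (recLang_isBiextendable x))
  rw [hG.length_left] at hp
  have horbit : ∀ t, subwordAt z (p + t) m = (follow (recLang x))^[t] L := by
    intro t
    induction t with
    | zero => exact hp
    | succ t ih =>
      rw [Function.iterate_succ_apply', ← ih, hG.follow_subwordAt hz (ih ▸ hmiss t), add_assoc]
  refine hx (UltimatelyPeriodic.of_shift (s := srec x (m + 1))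
    (ultimatelyPeriodic_of_subwordAt_eq (k := m) (p := p) fun i hi j _ hij => ?_))
  refine hG.letter_eq_of_subwordAt_eq hz hij ?_
  obtain ⟨t, rfl⟩ := Nat.exists_eq_add_of_le hi
  rw [horbit]
  exact hmiss t

lemma UniqueSpecials.tail_eq_follow_dropLast (hG : UniqueSpecials F m R L a b) {V : List A}
    (hV : V ∈ F) (hlen : V.length = m + 1) (hne : V.dropLast ≠ R) :
    V.tail = follow F V.dropLast := by
  have hV0 : V ≠ [] := List.ne_nil_of_length_pos (by omega)
  rw [hG.follow_eq (c := V.getLast hV0) (by simp [hlen]) hne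
    (by rwa [List.dropLast_append_getLast]), List.dropLast_append_getLast]

lemma UniqueSpecials.follow_lift (hF : IsBiextendable F) (hG : UniqueSpecials F m R L a b)
    {V : List A} (hV : V ∈ F) (hlen : V.length = m + 1) (hne : V.dropLast ≠ R) :
    follow F V ∈ F ∧ (follow F V).length = m + 1 ∧
      (follow F V).dropLast = follow F V.dropLast := by
  have hV0 : V ≠ [] := List.ne_nil_of_length_pos (by omega)
  obtain ⟨e, he, hfe⟩ := exists_follow_eq (hF.exists_append_mem hV)
  have hsuffix : V.tail ++ [e] <:+ V ++ [e] := by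
    rw [← List.tail_append_singleton_of_ne_nil hV0]
    exact List.tail_suffix _
  rw [hfe, List.tail_append_singleton_of_ne_nil hV0]
  exact ⟨hF.mem_of_infix he hsuffix.isInfix, by simp [hlen],
    by rw [List.dropLast_concat, hG.tail_eq_follow_dropLast hV hlen hne]⟩

lemma UniqueSpecials.rightExts_subset_cons (hF : IsBiextendable F)
    (hG : UniqueSpecials F m R L a b) (hRL : R ≠ L) {d : A} (hd : d :: R ∈ F) :
    rightExts F R ⊆ rightExts F (d :: R) := by
  intro e he
  obtain ⟨f, hf⟩ := hF.exists_cons_mem he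
  have hfR : f :: R ∈ F := hF.mem_of_infix hf (List.prefix_append (f :: R) [e]).isInfix
  obtain rfl : f = d := by
    by_contra hfd
    exact hRL (hG.eq_left R hG.length_right ⟨f, hfR, d, hd, hfd⟩)
  exact hf

/-- The path from `L'` one level up runs above the path from `L` (its vertices are the edges of
the latter), and the vertex `cR` above `R` inherits both out-edges of `R` because `R`, not being
left special, has the single left extension `c`. -/
lemma UniqueSpecials.follow_iterate_succ_level (hF : IsBiextendable F)
    (hG : UniqueSpecials F m R L a b) {R' L' : List A} {a' b' : A}
    (hG' : UniqueSpecials F (m + 1) R' L' a' b') {t : ℕ}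
    (hhit : (follow F)^[t + 1] L = R) (hbefore : ∀ s ≤ t, (follow F)^[s] L ≠ R) :
    (follow F)^[t] L' = R' ∧ ∀ s < t, (follow F)^[s] L' ≠ R' := by
  have hRL : R ≠ L := fun h => hbefore 0 (Nat.zero_le t) h.symm
  have hL' : L'.dropLast = L := hG.eq_left _ (by simp [hG'.length_left])
    (hG'.leftExts_nontrivial.mono (hF.leftExts_subset_dropLast L'))
  have hinv : ∀ k ≤ t, (follow F)^[k] L' ∈ F ∧ ((follow F)^[k] L').length = m + 1 ∧
      ((follow F)^[k] L').dropLast = (follow F)^[k] L := by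
    intro k
    induction k with
    | zero => exact fun _ => ⟨hG'.left_mem hF, hG'.length_left, hL'⟩
    | succ k ih =>
      intro hk
      obtain ⟨hV, hlen, hdrop⟩ := ih (by omega)
      rw [Function.iterate_succ_apply', Function.iterate_succ_apply', ← hdrop]
      exact hG.follow_lift hF hV hlen (hdrop ▸ hbefore k (by omega))
  have htail : ∀ k ≤ t, ((follow F)^[k] L').tail = (follow F)^[k + 1] L := by
    intro k hk
    obtain ⟨hV, hlen, hdrop⟩ := hinv k hk
    rw [hG.tail_eq_follow_dropLast hV hlen (hdrop ▸ hbefore k hk), hdrop,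
      Function.iterate_succ_apply']
  have hR' : (follow F)^[t] L' = R' := by
    obtain ⟨hV, hlen, -⟩ := hinv t le_rfl
    obtain ⟨d, r, hdr⟩ := List.exists_cons_of_length_eq_add_one hlen
    have hr : r = R := by rw [← hhit, ← htail t le_rfl, hdr, List.tail_cons]
    rw [hdr, hr] at hV ⊢
    refine hG'.eq_right _ (by simp [hG.length_right]) ?_
    refine Set.Nontrivial.mono ?_ (hG.rightExts_subset_cons hF hRL hV)
    rw [hG.rightExts_eq]
    exact Set.nontrivial_pair hG.ne
  refine ⟨hR', fun s hs heq => hbefore (s + 1) hs ?_⟩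
  rw [← htail s hs.le, heq, ← hR', htail t le_rfl, hhit]

lemma UniqueSpecials.exists_bispecial_of_follow_iterate_eq [Finite A] {x : ℕ → A}
    (hx : ¬ UltimatelyPeriodic x) {t : ℕ} (hG : UniqueSpecials (recLang x) m R L a b)
    (hhit : (follow (recLang x))^[t] L = R)
    (hbefore : ∀ s < t, (follow (recLang x))^[s] L ≠ R) :
    ∃ W a' b', UniqueSpecials (recLang x) (m + t) W W a' b' := by
  induction t generalizing m R L a b with
  | zero =>
    obtain rfl : L = R := hhit
    exact ⟨L, a, b, hG⟩
  | succ t ih =>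
    have hF := recLang_isBiextendable x
    have hRL : R ≠ L := fun h => hbefore 0 t.succ_pos h.symm
    have hle : (slice _ (m + 1 + 1)).ncard ≤ _ := hG.ncard_slice_succ_le hF hRL
    have hlt := ncard_slice_recLang_lt hx (m + 1)
    obtain ⟨R', L', a', b', hG'⟩ := uniqueSpecials_of_ncard hF (m := m + 1) (by omega)
    obtain ⟨hhit', hbefore'⟩ := hG.follow_iterate_succ_level hF hG' hhit
      (fun s hs => hbefore s (Nat.lt_succ_of_le hs))
    obtain ⟨W, a'', b'', hW⟩ := ih hG' hhit' hbefore'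
    exact ⟨W, a'', b'', by rwa [show m + (t + 1) = m + 1 + t by omega]⟩

lemma UniqueSpecials.exists_bispecial [Finite A] {x : ℕ → A} (hx : ¬ UltimatelyPeriodic x)
    (hG : UniqueSpecials (recLang x) m R L a b) :
    ∃ t W a' b', UniqueSpecials (recLang x) (m + t) W W a' b' := by
  classical
  have hex := hG.exists_follow_iterate_eq hx
  exact ⟨_, hG.exists_bispecial_of_follow_iterate_eq hx (Nat.find_spec hex)
    fun s hs => Nat.find_min hex hs⟩

end Specials

section ReturnWord

variable {y : ℕ → A} {w : List A}

noncomputable def nextOcc (y : ℕ → A) (w : List A) (p : ℕ) : ℕ :=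
  sInf {q | p < q ∧ subwordAt y q w.length = w}

/-- The word read from position `p` up to the end of the next occurrence of `w` after `p`;
when `w` occurs at `p`, it is the label of a first-return cycle at `w` in the Rauzy graph. -/
noncomputable def returnWord (y : ℕ → A) (w : List A) (p : ℕ) : List A :=
  subwordAt y p (nextOcc y w p - p + w.length)

lemma nextOcc_spec (hw : OccursInfinitely w y) (p : ℕ) :
    p < nextOcc y w p ∧ subwordAt y (nextOcc y w p) w.length = w := by
  obtain ⟨q, hq, hpq⟩ := hw.exists_gt p
  exact Nat.sInf_mem (s := {q | p < q ∧ subwordAt y q w.length = w}) ⟨q, hpq, hq⟩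

lemma nextOcc_le {p q : ℕ} (hpq : p < q) (hq : subwordAt y q w.length = w) :
    nextOcc y w p ≤ q :=
  Nat.sInf_le ⟨hpq, hq⟩

lemma subwordAt_ne_of_lt_nextOcc {p q : ℕ} (hpq : p < q) (hq : q < nextOcc y w p) :
    subwordAt y q w.length ≠ w :=
  fun h => (nextOcc_le hpq h).not_gt hq

lemma returnWord_isCycleAt (hw : OccursInfinitely w y) {p : ℕ}
    (hp : subwordAt y p w.length = w) : IsCycleAt y w.length w (returnWord y w p) := by
  obtain ⟨hlt, hnext⟩ := nextOcc_spec hw p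
  refine ⟨by simp [returnWord]; omega, by rwa [returnWord, take_subwordAt _ _ (by omega)], ?_,
    isFactor_subwordAt _ _ _⟩
  rw [returnWord, length_subwordAt, drop_subwordAt]
  convert hnext using 2 <;> omega

lemma returnWord_not_occurs {p : ℕ} {j : ℕ} (hj : 0 < j)
    (hjlt : j < (returnWord y w p).length - w.length) :
    ((returnWord y w p).drop j).take w.length ≠ w := by
  simp only [returnWord, length_subwordAt] at hjlt ⊢
  rw [drop_subwordAt, take_subwordAt _ _ (by omega)]
  exact subwordAt_ne_of_lt_nextOcc (p := p) (by omega) (by omega)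

lemma take_returnWord (hw : OccursInfinitely w y) (p : ℕ) :
    (returnWord y w p).take (w.length + 1) = subwordAt y p (w.length + 1) :=
  take_subwordAt _ _ (by have := (nextOcc_spec hw p).1; omega)

lemma returnWord_eq_of_subwordAt_eq (hw : OccursInfinitely w y)
    (hdet : ∀ i j, subwordAt y i w.length = subwordAt y j w.length →
      subwordAt y i w.length ≠ w → y (i + w.length) = y (j + w.length))
    {p q : ℕ} (hpq : subwordAt y p (w.length + 1) = subwordAt y q (w.length + 1)) :
    returnWord y w p = returnWord y w q := by
  set m := w.length
  set g := nextOcc y w p - p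
  obtain ⟨hlt, hnext⟩ := nextOcc_spec hw p
  have hagree : ∀ i < g + m, y (p + i) = y (q + i) := by
    intro i
    induction i using Nat.strong_induction_on with
    | _ i ih =>
      intro hi
      rcases Nat.lt_or_ge i (m + 1) with him | him
      · exact subwordAt_eq_subwordAt_iff.1 hpq i him
      · have hwin : subwordAt y (p + (i - m)) m = subwordAt y (q + (i - m)) m :=
          subwordAt_eq_subwordAt_iff.2 fun l hl => by
            simpa only [add_assoc] using ih (i - m + l) (by omega) (by omega)
        have := hdet _ _ hwin (subwordAt_ne_of_lt_nextOcc (p := p) (by omega) (by omega))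
        rwa [add_assoc, Nat.sub_add_cancel (by omega), add_assoc q,
          Nat.sub_add_cancel (by omega)] at this
  have hwin : ∀ k ≤ g, subwordAt y (q + k) m = subwordAt y (p + k) m := fun k hk =>
    subwordAt_eq_subwordAt_iff.2 fun l hl => by
      simpa only [add_assoc] using (hagree (k + l) (by omega)).symm
  have hq : nextOcc y w q = q + g := by
    refine le_antisymm (nextOcc_le (by omega) ?_) (not_lt.1 fun hlt' => ?_)
    · rw [hwin g le_rfl, show p + g = nextOcc y w p by omega, hnext]
    · obtain ⟨hqlt, hqnext⟩ := nextOcc_spec hw q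
      rw [show nextOcc y w q = q + (nextOcc y w q - q) by omega, hwin _ (by omega)] at hqnext
      exact subwordAt_ne_of_lt_nextOcc (p := p) (by omega) (by omega) hqnext
  simp only [returnWord, hq, Nat.add_sub_cancel_left]
  exact subwordAt_eq_subwordAt_iff.2 hagree

lemma exists_returnWord_covering (hw : OccursInfinitely w y) {p t : ℕ}
    (hp : subwordAt y p w.length = w) (hpt : p ≤ t) :
    ∃ j, subwordAt y j w.length = w ∧ ∃ i ≤ (returnWord y w j).length - w.length,
      ((returnWord y w j).drop i).take w.length = subwordAt y t w.length := by
  classical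
  set j := Nat.findGreatest (fun q => subwordAt y q w.length = w) t
  have hj : subwordAt y j w.length = w :=
    Nat.findGreatest_spec (P := fun q => subwordAt y q w.length = w) hpt hp
  have hjt : j ≤ t := Nat.findGreatest_le t
  have htj : t < nextOcc y w j := not_le.1 fun hle =>
    Nat.findGreatest_is_greatest (nextOcc_spec hw j).1 hle (nextOcc_spec hw j).2
  refine ⟨j, hj, t - j, ?_, ?_⟩
  · simp only [returnWord, length_subwordAt]; omega
  · rw [returnWord, drop_subwordAt, take_subwordAt _ _ (by omega), Nat.add_sub_cancel' hjt]

lemma subwordAt_eq_of_subwordAt_succ_eq {p : ℕ} {c : A}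
    (h : subwordAt y p (w.length + 1) = w ++ [c]) : subwordAt y p w.length = w := by
  rw [← take_subwordAt y p w.length.le_succ, h, List.take_left' rfl]

lemma inftyShape_returnWord {a b : A} (hab : a ≠ b) {pa pb : ℕ}
    (hpa : subwordAt y pa (w.length + 1) = w ++ [a])
    (hpb : subwordAt y pb (w.length + 1) = w ++ [b])
    (hext : ∀ j, subwordAt y j w.length = w → y (j + w.length) = a ∨ y (j + w.length) = b)
    (hLS : LeftSpecial w y)
    (hspecial : ∀ v : List A, v.length = w.length → IsFactor v y →
      (LeftSpecial v y ∨ RightSpecial v y) → v = w)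
    (hrec : ∀ v : List A, v.length = w.length → IsFactor v y → OccursInfinitely v y) :
    InftyShape y w.length w (returnWord y w pa) (returnWord y w pb) := by
  have hpa' := subwordAt_eq_of_subwordAt_succ_eq hpa
  have hpb' := subwordAt_eq_of_subwordAt_succ_eq hpb
  have hw : OccursInfinitely w y := hrec w rfl ⟨pa, hpa'⟩
  have hdet : ∀ i j, subwordAt y i w.length = subwordAt y j w.length →
      subwordAt y i w.length ≠ w → y (i + w.length) = y (j + w.length) := by
    intro i j hij hne
    by_contra h
    refine hne (hspecial _ (by simp) (isFactor_subwordAt y i _)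
      (Or.inr ⟨y (i + w.length), y (j + w.length), h, ?_, ?_⟩))
    · rw [← subwordAt_succ]; exact isFactor_subwordAt y i _
    · rw [hij, ← subwordAt_succ]; exact isFactor_subwordAt y j _
  have hcover : ∀ j, subwordAt y j w.length = w →
      returnWord y w j = returnWord y w pa ∨ returnWord y w j = returnWord y w pb := by
    intro j hj
    rcases hext j hj with hja | hjb
    · exact .inl (returnWord_eq_of_subwordAt_eq hw hdet (by rw [hpa, subwordAt_succ, hj, hja]))
    · exact .inr (returnWord_eq_of_subwordAt_eq hw hdet (by rw [hpb, subwordAt_succ, hj, hjb]))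
  refine ⟨rfl, hLS, ⟨a, b, hab, ⟨pa, by simpa using hpa⟩, ⟨pb, by simpa using hpb⟩⟩,
    fun v hv hvy hs => hspecial v hv hvy hs, returnWord_isCycleAt hw hpa',
    returnWord_isCycleAt hw hpb', fun hUV => hab ?_, fun _ => returnWord_not_occurs,
    fun _ => returnWord_not_occurs, fun v hv hvy => ?_⟩
  · have := congrArg (List.take (w.length + 1)) hUV
    rw [take_returnWord hw, take_returnWord hw, hpa, hpb] at this
    simpa using this
  · obtain ⟨t, ht, hpat⟩ := (hrec v hv hvy).exists_gt pa
    obtain ⟨j, hj, hcov⟩ := exists_returnWord_covering hw hpa' hpat.le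
    rw [Set.mem_ofPred_eq, hv] at ht
    rw [ht] at hcov
    rcases hcover j hj with h | h <;> rw [h] at hcov
    · exact .inl hcov
    · exact .inr hcov

end ReturnWord

section Bispecial

lemma rightSpecial_ztail_iff [Finite A] {x : ℕ → A} {k : ℕ} {u : List A}
    (hu : u.length + 1 ≤ k) :
    RightSpecial u (ztail x k) ↔ (rightExts (recLang x) u).Nontrivial := by
  have h : ∀ c, IsFactor (u ++ [c]) (ztail x k) ↔ c ∈ rightExts (recLang x) u :=
    fun c => isFactor_ztail_iff (by simpa using hu)
  simp only [RightSpecial, Set.Nontrivial, h]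
  grind

lemma leftSpecial_ztail_iff [Finite A] {x : ℕ → A} {k : ℕ} {u : List A}
    (hu : u.length + 1 ≤ k) :
    LeftSpecial u (ztail x k) ↔ (leftExts (recLang x) u).Nontrivial := by
  have h : ∀ c, IsFactor (c :: u) (ztail x k) ↔ c ∈ leftExts (recLang x) u :=
    fun c => isFactor_ztail_iff (by simpa using hu)
  simp only [LeftSpecial, Set.Nontrivial, h]
  grind

variable {x : ℕ → A} {m : ℕ} {R L : List A} {a b : A}

lemma UniqueSpecials.existsUnique_rightSpecial [Finite A]
    (hG : UniqueSpecials (recLang x) m R L a b) :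
    ∃! u : List A, u.length = m ∧ IsFactor u (ztail x (m + 1)) ∧
      RightSpecial u (ztail x (m + 1)) := by
  have hR : (rightExts (recLang x) R).Nontrivial := hG.rightExts_eq ▸ Set.nontrivial_pair hG.ne
  refine ⟨R, ⟨hG.length_right, ?_, (rightSpecial_ztail_iff (by simp [hG.length_right])).2 hR⟩,
    fun u ⟨hu, _, hRS⟩ => hG.eq_right u hu ((rightSpecial_ztail_iff (by omega)).1 hRS)⟩
  obtain ⟨c, hc, -⟩ := hR
  exact (isFactor_ztail_iff (by simp [hG.length_right])).2
    ((recLang_isBiextendable x).mem_of_append_mem hc)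

lemma UniqueSpecials.existsUnique_leftSpecial [Finite A]
    (hG : UniqueSpecials (recLang x) m R L a b) :
    ∃! u : List A, u.length = m ∧ IsFactor u (ztail x (m + 1)) ∧
      LeftSpecial u (ztail x (m + 1)) :=
  ⟨L, ⟨hG.length_left, (isFactor_ztail_iff (by simp [hG.length_left])).2
      (hG.left_mem (recLang_isBiextendable x)),
    (leftSpecial_ztail_iff (by simp [hG.length_left])).2 hG.leftExts_nontrivial⟩,
    fun u ⟨hu, _, hLS⟩ => hG.eq_left u hu ((leftSpecial_ztail_iff (by omega)).1 hLS)⟩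

lemma UniqueSpecials.inftyShape [Finite A] {w : List A}
    (hG : UniqueSpecials (recLang x) m w w a b) :
    ∃ U V, InftyShape (ztail x (m + 1)) m w U V := by
  obtain rfl := hG.length_right
  set y := ztail x (w.length + 1)
  have hext : ∀ c ∈ rightExts (recLang x) w,
      ∃ p, subwordAt y p (w.length + 1) = w ++ [c] := by
    intro c hc
    obtain ⟨p, hp⟩ := (isFactor_ztail_iff (x := x) (m := w.length + 1) (by simp)).2 hc
    exact ⟨p, by simpa using hp⟩
  obtain ⟨pa, hpa⟩ := hext a (by simp [hG.rightExts_eq])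
  obtain ⟨pb, hpb⟩ := hext b (by simp [hG.rightExts_eq])
  refine ⟨_, _, inftyShape_returnWord hG.ne hpa hpb (fun j hj => ?_)
    ((leftSpecial_ztail_iff le_rfl).2 hG.leftExts_nontrivial) (fun v hv _ hs => ?_)
    (fun v hv hvy => ?_)⟩
  · have hjext : y (j + w.length) ∈ rightExts (recLang x) w := by
      have := subwordAt_ztail_mem_recLang x (m := w.length + 1) le_rfl j
      rwa [subwordAt_succ, hj] at this
    simpa [hG.rightExts_eq] using hjext
  · rcases hs with hLS | hRS
    · exact hG.eq_left v hv ((leftSpecial_ztail_iff (by omega)).1 hLS)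
    · exact hG.eq_right v hv ((rightSpecial_ztail_iff (by omega)).1 hRS)
  · exact OccursInfinitely.shift ((isFactor_ztail_iff (by omega)).1 hvy) _

end Bispecial

end Rauzy

theorem reduced_rauzy_structure_of_complexity_step_general {A : Type*} [Fintype A] (x : ℕ → A)
    (n : ℕ) (hx : ¬ UltimatelyPeriodic x)
    (hp : complexity x (n + 1) = complexity x n + 1) :
    (∃! u : List A, u.length = n ∧ IsFactor u (ztail x (n + 1)) ∧
        RightSpecial u (ztail x (n + 1))) ∧
    (∃! u : List A, u.length = n ∧ IsFactor u (ztail x (n + 1)) ∧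
        LeftSpecial u (ztail x (n + 1))) ∧
    ((∃ w U V : List A, InftyShape (ztail x (n + 1)) n w U V) ∨
      (∃ d : ℕ, 0 < d ∧ ∃ w U V : List A,
        InftyShape (ztail x (n + d + 1)) (n + d) w U V)) := by
  obtain ⟨R, L, a, b, hG⟩ := Rauzy.uniqueSpecials_of_ncard (Rauzy.recLang_isBiextendable x)
    (Rauzy.ncard_slice_recLang_succ hx hp)
  refine ⟨hG.existsUnique_rightSpecial, hG.existsUnique_leftSpecial, ?_⟩
  obtain ⟨d, w, a', b', hW⟩ := hG.exists_bispecial hx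
  rcases Nat.eq_zero_or_pos d with rfl | hd
  · exact Or.inl ⟨w, hW.inftyShape⟩
  · exact Or.inr ⟨d, hd, w, hW.inftyShape⟩

theorem reduced_rauzy_structure_of_complexity_step {A : Type*} [Fintype A] (x : ℕ → A)
    (n : ℕ) (hn : 1 ≤ n) (hx : ¬ UltimatelyPeriodic x)
    (hp : complexity x (n + 1) = complexity x n + 1) :
    (∃! u : List A, u.length = n ∧ IsFactor u (ztail x (n + 1)) ∧
        RightSpecial u (ztail x (n + 1))) ∧
    (∃! u : List A, u.length = n ∧ IsFactor u (ztail x (n + 1)) ∧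
        LeftSpecial u (ztail x (n + 1))) ∧
    ((∃ w U V : List A, InftyShape (ztail x (n + 1)) n w U V) ∨
      (∃ d : ℕ, 0 < d ∧ ∃ w U V : List A,
        InftyShape (ztail x (n + d + 1)) (n + d) w U V)) :=
  reduced_rauzy_structure_of_complexity_step_general x n hx hp
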